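/- In the whole-page model of Algorithm 1, if the event order is write w, then sync, then crash, with no write-back between the sync and the crash (case [w, sync, crash, r]), then at crash time latest_dev = NVM and the NVM version is ≥ the version of w, so recovery returns data no earlier than w. -/
import Mathlib


/- Whole-page model of Algorithm 1: single page with version numbers,
   state = (cache, disk, nvm, dirty, latest_dev). -/

inductive Dev | disk | nvm
deriving DecidableEq

inductive Event
  | write (v : ℕ)   -- write a fresh version v to the cache
  | sync
  | writeback
  | crash
  | read
deriving DecidableEq

structure St where
  cache : ℕ
  disk  : ℕ
  nvm   : ℕ
  dirty : Bool
  dev   : Dev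

/-- The version held by the device named by `latest_dev`. -/
def deviceVal (s : St) : ℕ :=
  match s.dev with
  | .disk => s.disk
  | .nvm  => s.nvm

/-- Algorithm 1 transitions.  A crash erases the cache and recovery restores
    it from the device indicated by `latest_dev`. -/
def step (s : St) : Event → St
  | .write v   => { s with cache := v, dirty := true }
  | .writeback => { s with disk := s.cache, dirty := false, dev := .disk }
  | .sync      => if s.dirty then { s with nvm := s.cache, dirty := false, dev := .nvm } else s
  | .crash     => { s with cache := deviceVal s }
  | .read      => s

def run (s : St) (tr : List Event) : St := tr.foldl step s

lemma run_reads (s : St) (r : List Event) (h : ∀ e ∈ r, e = Event.read) :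
    run s r = s := by
  induction r with
  | nil => rfl
  | cons e t ih =>
    have he := h e (List.mem_cons_self ..)
    subst he
    exact ih (fun e he => h e (List.mem_cons_of_mem _ he))

/-- Case [w, sync, crash, r]: write, then sync, then crash,
    with no write-back in between (only reads may interleave).  At crash time
    latest_dev = NVM, the NVM version is ≥ v, and recovery returns a version
    no earlier than v. -/
theorem case_w_sync_crash_r (s₀ : St) (v : ℕ) (r₁ r₂ : List Event)
    (h₁ : ∀ e ∈ r₁, e = Event.read) (h₂ : ∀ e ∈ r₂, e = Event.read) :
    let sCrash := run s₀ ([Event.write v] ++ r₁ ++ [Event.sync] ++ r₂)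
    sCrash.dev = Dev.nvm ∧ v ≤ sCrash.nvm ∧ v ≤ (step sCrash Event.crash).cache := by
  intro sCrash
  have : sCrash = run (run (step (run (step s₀ (Event.write v)) r₁) Event.sync) r₂) [] := by
    simp [sCrash, run, List.foldl_append]
  rw [run_reads _ _ h₁, run_reads _ _ h₂] at this
  simp only [run, List.foldl] at this
  rw [this]
  simp [step, deviceVal]
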